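/- arXiv:2411.02904 — 3 statements merged into one kernel-verified Lean document; each statement's English description precedes it below -/
import Mathlib

section
/- Weights stay near their initialization. Suppose t ∈ {0,…,T−1} for T ≥ 1 and ‖ŷ(t') − y‖₂ ≤ c_u·√n for all 0 ≤ t' ≤ t. Then for every r ∈ [m] and every 0 ≤ t' ≤ t+1, ‖w_r(t') − w_r(0)‖₂ ≤ R := η·c_u·u_0·T/√m. -/
open MeasureTheory ProbabilityTheory Real Finset
open scoped ENNReal NNReal

noncomputable section

/-- Euclidean dot product on `Fin k → ℝ`. -/
def dot {k : ℕ} (x y : Fin k → ℝ) : ℝ := ∑ i, x i * y i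

/-- Euclidean (`ℓ²`) norm on `Fin k → ℝ`. -/
def nrm {k : ℕ} (x : Fin k → ℝ) : ℝ := Real.sqrt (dot x x)

/-- Append `1` as a last coordinate: `x̃ = (xᵀ, 1)ᵀ`. -/
def app1 {d : ℕ} (x : Fin d → ℝ) : Fin (d + 1) → ℝ := Fin.snoc x 1

/-- The NTK of the two-layer ReLU network. -/
def NTK {d : ℕ} (u v : Fin d → ℝ) : ℝ :=
  dot (app1 u) (app1 v) / (2 * π) *
    (π - arccos (dot (app1 u) (app1 v) / (nrm (app1 u) * nrm (app1 v))))

/-- The two-layer ReLU network `f(W,x) = (1/√m) ∑ a_r σ(w_rᵀ x̃)`. -/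
def net {d m : ℕ} (a : Fin m → ℝ) (W : Fin m → Fin (d + 1) → ℝ) (x : Fin d → ℝ) : ℝ :=
  (1 / Real.sqrt m) * ∑ r, a r * max (dot (W r) (app1 x)) 0

/-- Gradient descent trajectory for the squared loss `L(W) = (1/2n) ∑ (f(W,x_i) − y_i)²`. -/
def gdTraj {d m n : ℕ} (η : ℝ) (a : Fin m → ℝ) (xs : Fin n → Fin d → ℝ)
    (y : Fin n → ℝ) (W : ℕ → Fin m → Fin (d + 1) → ℝ) : Prop :=
  ∀ t r, W (t + 1) r = W t r - (η / n) •
    ∑ i, ((1 / Real.sqrt m) * (if 0 ≤ dot (W t r) (app1 (xs i)) then (1 : ℝ) else 0) *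
      a r * (net a (W t) (xs i) - y i)) • app1 (xs i)

/-- Empirical kernel matrix `K_n = (K(x_i,x_j)/n)_{ij}`. -/
def kermat {α : Type*} {n : ℕ} (K : α → α → ℝ) (xs : Fin n → α) : Matrix (Fin n) (Fin n) ℝ :=
  Matrix.of fun i j => K (xs i) (xs j) / n

/-- The constant `c_u = max{μ₀/√(2eη), μ₀u₀/√2} + σ₀ + τ + 1`. -/
def cu (μ0 σ0 τ u0 η : ℝ) : ℝ :=
  max (μ0 / Real.sqrt (2 * Real.exp 1 * η)) (μ0 * u0 / Real.sqrt 2) + σ0 + τ + 1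

/-- The radius `R = η c_u u₀ T / √m`. -/
def Rrad (μ0 σ0 τ u0 η : ℝ) (T m : ℕ) : ℝ :=
  η * cu μ0 σ0 τ u0 η * u0 * T / Real.sqrt m

/-- Empirical kernel complexity `R̂_K(ε) = ((1/n) ∑ min{λ̂_i, ε²})^{1/2}`. -/
def RhatC {n : ℕ} (lamh : Fin n → ℝ) (ε : ℝ) : ℝ :=
  Real.sqrt ((1 / (n : ℝ)) * ∑ i, min (lamh i) (ε ^ 2))

/-- Population kernel complexity `R_K(ε) = ((1/n) ∑' min{λ_j, ε²})^{1/2}`. -/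
def RKC (lam : ℕ → ℝ) (n : ℕ) (ε : ℝ) : ℝ :=
  Real.sqrt ((1 / (n : ℝ)) * ∑' j, min (lam j) (ε ^ 2))

/-- The stopping time `T̂ = min{t : R̂_K(√(1/(ηt))) > 1/(σ₀ηt)} − 1`. -/
def stopT {n : ℕ} (lamh : Fin n → ℝ) (σ0 η : ℝ) : ℕ :=
  sInf {t : ℕ | RhatC lamh (Real.sqrt (1 / (η * t))) > 1 / (σ0 * (η * t))} - 1

/-- The empirical kernel `ĥ(W,u,v)`. -/
def hath {d m : ℕ} (W : Fin m → Fin (d + 1) → ℝ) (u v : Fin d → ℝ) : ℝ :=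
  (1 / (m : ℝ)) * ∑ r, dot (app1 u) (app1 v) *
    (if 0 ≤ dot (W r) (app1 u) then (1 : ℝ) else 0) *
    (if 0 ≤ dot (W r) (app1 v) then (1 : ℝ) else 0)

/-- The fraction `v̂_R(W,u)` of weights near the activation boundary. -/
def vhat {d m : ℕ} (W : Fin m → Fin (d + 1) → ℝ) (R : ℝ) (u : Fin d → ℝ) : ℝ :=
  (1 / (m : ℝ)) * ∑ r, if |dot (W r) (app1 u)| ≤ R then (1 : ℝ) else 0

/-- The explicit quantity `C₁(m,d,δ)` (built from the absolute constant `B`). -/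
def Cone (B : ℝ) (m d : ℕ) (δ : ℝ) : ℝ :=
  (1 / Real.sqrt m) * (6 * (1 + 2 * B * Real.sqrt d) +
    Real.sqrt (2 * Real.log (2 * (1 + 2 * (m : ℝ)) ^ (2 * (d + 1)) / δ))) +
  (1 / (m : ℝ)) * (6 + 14 / 3 * Real.log (2 * (1 + 2 * (m : ℝ)) ^ (2 * (d + 1)) / δ))

/-- The explicit quantity `C₂(m,d,δ)` (also depending on `κ` and `T`). -/
def Ctwo (κ : ℝ) (T m d : ℕ) (δ : ℝ) : ℝ :=
  3 * Real.sqrt ((d : ℝ) / κ) * (m : ℝ) ^ (-(1 / 5 : ℝ)) * Real.sqrt T +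
  Real.sqrt ((2 / (m : ℝ)) * Real.log (2 * (1 + 2 * Real.sqrt m) ^ (d + 1) / δ)) +
  (7 / (3 * (m : ℝ))) * Real.log (2 * (1 + 2 * Real.sqrt m) ^ (d + 1) / δ)

/-- Membership in the radius-`B` ball of the RKHS of the kernel `K`, via the standard
characterization through finite kernel sections. -/
def inKBall {α : Type*} (K : α → α → ℝ) (B : ℝ) (f : α → ℝ) : Prop :=
  ∀ (k : ℕ) (z : Fin k → α) (c : Fin k → ℝ),
    |∑ i, c i * f (z i)| ≤ B * Real.sqrt (∑ i, ∑ j, c i * c j * K (z i) (z j))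

/-- The set `W₀` of good random initializations (here `m2` stands for `m/2`). -/
def goodInit {d m : ℕ} (X : Set (Fin d → ℝ)) (B κ u0 μ0 σ0 τ η : ℝ) (T n m2 : ℕ)
    (W : Fin m → Fin (d + 1) → ℝ) : Prop :=
  (∀ u ∈ X, ∀ v ∈ X, |NTK u v - hath W u v| ≤ u0 ^ 2 * Cone B m2 d (1 / n)) ∧
  (∀ u ∈ X, vhat W (Rrad μ0 σ0 τ u0 η T m) u ≤
    2 * Rrad μ0 σ0 τ u0 η T m / (Real.sqrt (2 * π) * κ) + Ctwo κ T m2 d (1 / n))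

/-- The set `V_t = {−(I − ηK_n)^t f*(S)}`. -/
def Vset {d n : ℕ} (η : ℝ) (xs : Fin n → Fin d → ℝ) (fstar : (Fin d → ℝ) → ℝ) (t : ℕ) :
    Set (Fin n → ℝ) :=
  { v | v = -((1 - η • kermat NTK xs) ^ t).mulVec fun i => fstar (xs i) }

/-- The set `E_{t,τ} = {e₁ + e₂ : e₁ = −(I − ηK_n)^t w, ‖e₂‖₂ ≤ √n τ}`. -/
def Eset {d n : ℕ} (η τ : ℝ) (xs : Fin n → Fin d → ℝ) (w : Fin n → ℝ) (t : ℕ) :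
    Set (Fin n → ℝ) :=
  { e | ∃ e2 : Fin n → ℝ, e = -((1 - η • kermat NTK xs) ^ t).mulVec w + e2 ∧
      nrm e2 ≤ Real.sqrt n * τ }

/-- The set `W(S, W(0), T)` of weight configurations reachable within `T` GD steps whose
residuals decompose as `v(t') + e(t')` with `v(t') ∈ V_{t'}`, `e(t') ∈ E_{t',τ}`. -/
def WreachSet {d m n : ℕ} (η τ : ℝ) (a : Fin m → ℝ) (xs : Fin n → Fin d → ℝ)
    (fstar : (Fin d → ℝ) → ℝ) (w : Fin n → ℝ)
    (W0 : Fin m → Fin (d + 1) → ℝ) (T : ℕ) : Set (Fin m → Fin (d + 1) → ℝ) :=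
  { W | ∃ t ∈ Finset.Icc 1 T, ∃ Wt : ℕ → Fin m → Fin (d + 1) → ℝ, ∃ u : ℕ → Fin n → ℝ,
      Wt 0 = W0 ∧ W = Wt t ∧
      (∀ t' < t, ∃ v ∈ Vset η xs fstar t', ∃ e ∈ Eset η τ xs w t', u t' = v + e) ∧
      (∀ t' < t, ∀ r, Wt (t' + 1) r = Wt t' r - (η / n) •
        ∑ i, ((1 / Real.sqrt m) * (if 0 ≤ dot (Wt t' r) (app1 (xs i)) then (1 : ℝ) else 0) *
          a r * u t' i) • app1 (xs i)) }

/-- Uniform distribution on `{−1, 1} ⊆ ℝ`. -/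
def signLaw : Measure ℝ :=
  (2 : ℝ≥0∞)⁻¹ • Measure.dirac (1 : ℝ) + (2 : ℝ≥0∞)⁻¹ • Measure.dirac (-1 : ℝ)

/-- The Gaussian law `N(0, κ² I_{d+1})` on `Fin (d+1) → ℝ`. -/
def gaussLawVec (d : ℕ) (κ : ℝ) : Measure (Fin (d + 1) → ℝ) :=
  Measure.pi fun _ => gaussianReal 0 (κ ^ 2).toNNReal

-- helpers
def eE {k : ℕ} (x : Fin k → ℝ) : EuclideanSpace ℝ (Fin k) := (WithLp.equiv 2 _).symm x

lemma nrm_eq_norm' {k : ℕ} (x : Fin k → ℝ) : nrm x = ‖eE x‖ := by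
  rw [nrm, dot, EuclideanSpace.norm_eq]
  congr 1
  refine Finset.sum_congr rfl fun i _ => ?_
  rw [Real.norm_eq_abs, sq_abs, sq]; rfl

lemma abs_sum_sq_le {n : ℕ} (f : Fin n → ℝ) :
    ∑ i, |f i| ≤ Real.sqrt n * nrm f := by
  have h := Finset.sum_mul_sq_le_sq_mul_sq Finset.univ (fun i => |f i|) (fun _ => (1 : ℝ))
  simp only [mul_one, one_pow] at h
  have h1 : ∑ i : Fin n, |f i| ^ 2 = ∑ i, f i * f i := by
    refine Finset.sum_congr rfl fun i _ => ?_; rw [sq_abs, sq]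
  have h2 : ∑ _i : Fin n, (1 : ℝ) = n := by simp
  rw [h1, h2] at h
  have hdot : (0:ℝ) ≤ dot f f := Finset.sum_nonneg fun i _ => mul_self_nonneg _
  have hle : (∑ i, |f i|) ^ 2 ≤ ((Real.sqrt n * nrm f)) ^ 2 := by
    rw [mul_pow, nrm, Real.sq_sqrt (by positivity : (0:ℝ) ≤ (n:ℝ)), Real.sq_sqrt hdot]
    exact h.trans_eq (mul_comm _ _)
  have h3 := Real.sqrt_le_sqrt hle
  rwa [Real.sqrt_sq (Finset.sum_nonneg fun i _ => abs_nonneg _),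
    Real.sqrt_sq (mul_nonneg (Real.sqrt_nonneg _) (Real.sqrt_nonneg (dot f f)) : (0:ℝ) ≤ Real.sqrt n * nrm f)] at h3


/-- Weights stay near their initialization: if the GD residuals up to step `t ≤ T − 1`
are bounded by `c_u √n`, then every weight vector stays within distance
`R = η c_u u₀ T / √m` of its initialization, up to step `t + 1`. -/
theorem weights_near_init
    (d m n : ℕ) (hm : 0 < m) (hn : 0 < n)
    (u0 μ0 σ0 τ η : ℝ) (hu0 : 1 < u0) (hμ0 : 0 < μ0) (hσ0 : 0 < σ0)
    (hτ0 : 0 < τ) (hτ1 : τ ≤ 1) (hη : 0 < η)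
    (X : Set (Fin d → ℝ)) (hX : ∀ x ∈ X, nrm (app1 x) ≤ u0)
    (xs : Fin n → Fin d → ℝ) (hxs : ∀ i, xs i ∈ X)
    (y : Fin n → ℝ) (a : Fin m → ℝ) (ha : ∀ r, a r = 1 ∨ a r = -1)
    (W : ℕ → Fin m → Fin (d + 1) → ℝ) (hGD : gdTraj η a xs y W)
    (T : ℕ) (hT : 1 ≤ T) (t : ℕ) (ht : t ≤ T - 1)
    (hres : ∀ t' ≤ t, nrm (fun i => net a (W t') (xs i) - y i) ≤
      cu μ0 σ0 τ u0 η * Real.sqrt n) :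
    ∀ r : Fin m, ∀ t' ≤ t + 1,
      nrm (fun i => W t' r i - W 0 r i) ≤ Rrad μ0 σ0 τ u0 η T m := by
  set C := cu μ0 σ0 τ u0 η with hC
  have hCpos : 0 < C := by
    have : 0 < μ0 / Real.sqrt (2 * Real.exp 1 * η) := by positivity
    have hmax : 0 < max (μ0 / Real.sqrt (2 * Real.exp 1 * η)) (μ0 * u0 / Real.sqrt 2) :=
      lt_max_of_lt_left this
    rw [hC]; unfold cu; linarith
  set step := η * C * u0 / Real.sqrt m with hstep
  have hstep_nonneg : 0 ≤ step := by positivity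
  -- per-step bound
  have key : ∀ s ≤ t, ∀ r : Fin m,
      ‖eE (W (s+1) r) - eE (W s r)‖ ≤ step := by
    intro s hs r
    have hGDs := hGD s r
    set c : Fin n → ℝ := fun i =>
      (1 / Real.sqrt m) * (if 0 ≤ dot (W s r) (app1 (xs i)) then (1 : ℝ) else 0) *
        a r * (net a (W s) (xs i) - y i) with hc
    have hdiff : eE (W (s+1) r) - eE (W s r)
        = (-(η / n)) • ∑ i, c i • eE (app1 (xs i)) := by
      rw [hGDs]
      show eE (W s r - (η / n) • ∑ i, c i • app1 (xs i)) - eE (W s r) = _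
      have : eE (W s r - (η / n) • ∑ i, c i • app1 (xs i))
          = eE (W s r) - (η / n) • ∑ i, c i • eE (app1 (xs i)) := by simp [eE]
      rw [this]; module
    rw [hdiff, norm_smul]
    have hsum : ‖∑ i, c i • eE (app1 (xs i))‖ ≤ ∑ i, |c i| * u0 := by
      refine (norm_sum_le _ _).trans (Finset.sum_le_sum fun i _ => ?_)
      rw [norm_smul, Real.norm_eq_abs]
      exact mul_le_mul_of_nonneg_left
        ((nrm_eq_norm' _).symm.trans_le (hX _ (hxs i)) : ‖eE (app1 (xs i))‖ ≤ u0)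
        (abs_nonneg _)
    have hci : ∀ i, |c i| ≤ (1 / Real.sqrt m) * |net a (W s) (xs i) - y i| := by
      intro i
      rw [hc]
      have hind : |(if 0 ≤ dot (W s r) (app1 (xs i)) then (1 : ℝ) else 0)| ≤ 1 := by
        split <;> simp
      have har : |a r| = 1 := by rcases ha r with h | h <;> simp [h]
      calc |(1 / Real.sqrt m) * (if 0 ≤ dot (W s r) (app1 (xs i)) then (1:ℝ) else 0) *
            a r * (net a (W s) (xs i) - y i)|
          = (1 / Real.sqrt m) * |(if 0 ≤ dot (W s r) (app1 (xs i)) then (1:ℝ) else 0)| *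
            |a r| * |net a (W s) (xs i) - y i| := by
            rw [abs_mul, abs_mul, abs_mul, abs_of_nonneg (by positivity : (0:ℝ) ≤ 1 / Real.sqrt m)]
        _ ≤ (1 / Real.sqrt m) * |net a (W s) (xs i) - y i| := by
            rw [har, mul_one]
            refine mul_le_mul_of_nonneg_right ?_ (abs_nonneg _)
            calc (1 / Real.sqrt m) * |(if 0 ≤ dot (W s r) (app1 (xs i)) then (1:ℝ) else 0)|
                ≤ (1 / Real.sqrt m) * 1 :=
                  mul_le_mul_of_nonneg_left hind (by positivity)
              _ = 1 / Real.sqrt m := mul_one _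
    have hsum2 : ∑ i, |c i| * u0 ≤ (1 / Real.sqrt m) * u0 * Real.sqrt n * (C * Real.sqrt n) := by
      have h1 : ∑ i, |c i| * u0 ≤ (1 / Real.sqrt m) * u0 * ∑ i, |net a (W s) (xs i) - y i| := by
        rw [Finset.mul_sum]
        refine Finset.sum_le_sum fun i _ => ?_
        calc |c i| * u0 ≤ ((1 / Real.sqrt m) * |net a (W s) (xs i) - y i|) * u0 := by
              exact mul_le_mul_of_nonneg_right (hci i) (by linarith)
          _ = (1 / Real.sqrt m) * u0 * |net a (W s) (xs i) - y i| := by ring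
      refine h1.trans ?_
      have h2 : ∑ i, |net a (W s) (xs i) - y i|
          ≤ Real.sqrt n * (C * Real.sqrt n) := by
        have := abs_sum_sq_le (fun i => net a (W s) (xs i) - y i)
        refine this.trans ?_
        exact mul_le_mul_of_nonneg_left (hres s hs) (Real.sqrt_nonneg _)
      calc (1 / Real.sqrt m) * u0 * ∑ i, |net a (W s) (xs i) - y i|
          ≤ (1 / Real.sqrt m) * u0 * (Real.sqrt n * (C * Real.sqrt n)) := by
            refine mul_le_mul_of_nonneg_left h2 (by positivity)
        _ = (1 / Real.sqrt m) * u0 * Real.sqrt n * (C * Real.sqrt n) := by ring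
    have hnn : Real.sqrt n * Real.sqrt n = n :=
      Real.mul_self_sqrt (by positivity)
    have habsη : |(-(η / n))| = η / n := by
      rw [abs_neg, abs_of_nonneg (by positivity)]
    calc |(-(η / (n:ℝ)))| * ‖∑ i, c i • eE (app1 (xs i))‖
        ≤ (η / n) * ((1 / Real.sqrt m) * u0 * Real.sqrt n * (C * Real.sqrt n)) := by
          rw [habsη]
          exact mul_le_mul_of_nonneg_left (hsum.trans hsum2) (by positivity)
      _ = step := by
          rw [hstep]
          field_simp
          ring_nf
          rw [Real.sq_sqrt (by positivity : (0:ℝ) ≤ (n:ℝ))]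
  -- telescoping
  intro r t' ht'
  have htel : ∀ s ≤ t + 1, ‖eE (W s r) - eE (W 0 r)‖ ≤ s * step := by
    intro s hsle
    induction s with
    | zero => simp
    | succ k ih =>
      have hk : k ≤ t := by omega
      calc ‖eE (W (k+1) r) - eE (W 0 r)‖
          ≤ ‖eE (W (k+1) r) - eE (W k r)‖ + ‖eE (W k r) - eE (W 0 r)‖ := by
            have := norm_sub_le_norm_sub_add_norm_sub (eE (W (k+1) r)) (eE (W k r)) (eE (W 0 r))
            exact this
        _ ≤ step + k * step := add_le_add (key k hk r) (ih (by omega))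
        _ = (k + 1 : ℕ) * step := by push_cast; ring
  have h1 : nrm (fun i => W t' r i - W 0 r i) = ‖eE (W t' r) - eE (W 0 r)‖ :=
    nrm_eq_norm' _
  rw [h1]
  refine (htel t' ht').trans ?_
  have ht'T : (t' : ℝ) ≤ T := by
    have : t' ≤ T := by omega
    exact_mod_cast this
  calc (t' : ℝ) * step ≤ T * step := by
        exact mul_le_mul_of_nonneg_right ht'T hstep_nonneg
    _ = Rrad μ0 σ0 τ u0 η T m := by
        rw [hstep, Rrad]; field_simp; ring
end
end

section
/- Fixed points of transformed sub-root functions. Let ψ : [0,∞) → [0,∞) be a sub-root function (nonnegative, nondecreasing, with r ↦ ψ(r)/√r nonincreasing for r > 0) with unique positive fixed point r*. Then: (1) for any a ≥ 0, r ↦ ψ(r) + a is sub-root, and its fixed point r*_a satisfies r* ≤ r*_a ≤ r* + 2a; (2) for any b ≥ 1 and c ≥ 0, r ↦ ψ(br + c) is sub-root, and its fixed point r*_b satisfies r*_b ≤ b·r* + 2c/b; (3) for any b ≥ 1, r ↦ b·ψ(r) is sub-root, and its fixed point satisfies r*_b ≤ b²·r*. -/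
noncomputable section

/-- A function `ψ : [0,∞) → [0,∞)` is *sub-root* if it is nonnegative, nondecreasing,
and `r ↦ ψ(r)/√r` is nonincreasing on `(0,∞)`. -/
def SubRoot (ψ : ℝ → ℝ) : Prop :=
  (∀ r : ℝ, 0 ≤ r → 0 ≤ ψ r) ∧ MonotoneOn ψ (Set.Ici 0) ∧
    AntitoneOn (fun r => ψ r / Real.sqrt r) (Set.Ioi 0)

private lemma subroot_upper {ψ : ℝ → ℝ} (hψ : SubRoot ψ) {rstar : ℝ}
    (hrpos : 0 < rstar) (hfix : ψ rstar = rstar) {r : ℝ} (hr : rstar ≤ r) :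
    ψ r ≤ Real.sqrt r * Real.sqrt rstar := by
  have hrp : 0 < r := lt_of_lt_of_le hrpos hr
  have h := hψ.2.2 (Set.mem_Ioi.2 hrpos) (Set.mem_Ioi.2 hrp) hr
  simp only at h
  rw [hfix, Real.div_sqrt] at h
  have hs : 0 < Real.sqrt r := Real.sqrt_pos.2 hrp
  rw [div_le_iff₀ hs] at h
  linarith [h]

private lemma subroot_lower {ψ : ℝ → ℝ} (hψ : SubRoot ψ) {rstar : ℝ}
    (hrpos : 0 < rstar) (hfix : ψ rstar = rstar) {r : ℝ} (hr0 : 0 < r) (hr : r ≤ rstar) :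
    Real.sqrt r * Real.sqrt rstar ≤ ψ r := by
  have h := hψ.2.2 (Set.mem_Ioi.2 hr0) (Set.mem_Ioi.2 hrpos) hr
  simp only at h
  rw [hfix, Real.div_sqrt] at h
  have hs : 0 < Real.sqrt r := Real.sqrt_pos.2 hr0
  rw [le_div_iff₀ hs] at h
  linarith [h]

/-- Fixed points of transformed sub-root functions (Lemma on sub-root fixed points):
if `ψ` is sub-root with positive fixed point `r*`, then
(1) `ψ + a` is sub-root and any positive fixed point `r*_a` satisfies `r* ≤ r*_a ≤ r* + 2a`;
(2) `r ↦ ψ(br + c)` (`b ≥ 1`, `c ≥ 0`) is sub-root and any positive fixed point `r*_b`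
satisfies `r*_b ≤ b r* + 2c/b`;
(3) `b·ψ` (`b ≥ 1`) is sub-root and any positive fixed point satisfies `r*_b ≤ b² r*`. -/
theorem subroot_fixed_point_transforms
    (ψ : ℝ → ℝ) (hψ : SubRoot ψ)
    (rstar : ℝ) (hrpos : 0 < rstar) (hfix : ψ rstar = rstar)
    (huniq : ∀ r : ℝ, 0 < r → ψ r = r → r = rstar) :
    (∀ a : ℝ, 0 ≤ a →
      SubRoot (fun r => ψ r + a) ∧
      ∀ ra : ℝ, 0 < ra → ψ ra + a = ra → rstar ≤ ra ∧ ra ≤ rstar + 2 * a) ∧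
    (∀ b c : ℝ, 1 ≤ b → 0 ≤ c →
      SubRoot (fun r => ψ (b * r + c)) ∧
      ∀ rb : ℝ, 0 < rb → ψ (b * rb + c) = rb → rb ≤ b * rstar + 2 * c / b) ∧
    (∀ b : ℝ, 1 ≤ b →
      SubRoot (fun r => b * ψ r) ∧
      ∀ rb : ℝ, 0 < rb → b * ψ rb = rb → rb ≤ b ^ 2 * rstar) := by
  obtain ⟨hnn, hmono, hanti⟩ := hψ
  refine ⟨?_, ?_, ?_⟩
  · -- Part (1)
    intro a ha
    constructor
    · refine ⟨fun r hr => add_nonneg (hnn r hr) ha, fun x hx y hy hxy => by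
        simpa using add_le_add_right (hmono hx hy hxy) a, ?_⟩
      intro x hx y hy hxy
      simp only at *
      have hx0 : (0:ℝ) < x := hx
      have hy0 : (0:ℝ) < y := hy
      have hsx : 0 < Real.sqrt x := Real.sqrt_pos.2 hx0
      have hsy : 0 < Real.sqrt y := Real.sqrt_pos.2 hy0
      rw [add_div, add_div]
      have h1 := hanti hx hy hxy
      simp only at h1
      have h2 : a / Real.sqrt y ≤ a / Real.sqrt x :=
        div_le_div_of_nonneg_left ha hsx (Real.sqrt_le_sqrt hxy)
      linarith
    · intro ra hra hfa
      have hψra : ψ ra = ra - a := by linarith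
      constructor
      · by_contra hlt
        push_neg at hlt
        have hl := subroot_lower ⟨hnn, hmono, hanti⟩ hrpos hfix hra hlt.le
        have hmm : Real.sqrt ra * Real.sqrt ra = ra := Real.mul_self_sqrt hra.le
        have hsra : 0 < Real.sqrt ra := Real.sqrt_pos.2 hra
        have hle : Real.sqrt rstar ≤ Real.sqrt ra := by
          have : Real.sqrt ra * Real.sqrt rstar ≤ Real.sqrt ra * Real.sqrt ra := by
            rw [hmm]; linarith
          exact le_of_mul_le_mul_left this hsra
        have hmm2 : Real.sqrt rstar * Real.sqrt rstar = rstar :=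
          Real.mul_self_sqrt hrpos.le
        have := mul_self_le_mul_self (Real.sqrt_nonneg rstar) hle
        rw [hmm, hmm2] at this
        linarith
      · rcases le_or_gt ra rstar with h | h
        · linarith
        · have hu := subroot_upper ⟨hnn, hmono, hanti⟩ hrpos hfix h.le
          have hamgm : 2 * (Real.sqrt ra * Real.sqrt rstar) ≤ ra + rstar := by
            nlinarith [sq_nonneg (Real.sqrt ra - Real.sqrt rstar),
              Real.sq_sqrt hra.le, Real.sq_sqrt hrpos.le]
          linarith
  · -- Part (2)
    intro b c hb hc
    have hb0 : (0:ℝ) < b := lt_of_lt_of_le one_pos hb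
    constructor
    · refine ⟨fun r hr => hnn _ (by nlinarith), fun x hx y hy hxy => ?_, ?_⟩
      · exact hmono (Set.mem_Ici.2 (by nlinarith [Set.mem_Ici.1 hx]))
          (Set.mem_Ici.2 (by nlinarith [Set.mem_Ici.1 hy]))
          (by nlinarith [Set.mem_Ici.1 hx])
      · intro x hx y hy hxy
        simp only at *
        have hx0 : (0:ℝ) < x := hx
        have hy0 : (0:ℝ) < y := hy
        have hu0 : (0:ℝ) < b * x + c := by nlinarith
        have hv0 : (0:ℝ) < b * y + c := by nlinarith
        have huv : b * x + c ≤ b * y + c := by nlinarith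
        have h1 := hanti (Set.mem_Ioi.2 hu0) (Set.mem_Ioi.2 hv0) huv
        simp only at h1
        have hsu : 0 < Real.sqrt (b * x + c) := Real.sqrt_pos.2 hu0
        have hsv : 0 < Real.sqrt (b * y + c) := Real.sqrt_pos.2 hv0
        have hsx : 0 < Real.sqrt x := Real.sqrt_pos.2 hx0
        have hsy : 0 < Real.sqrt y := Real.sqrt_pos.2 hy0
        rw [div_le_div_iff₀ hsv hsu] at h1
        rw [div_le_div_iff₀ hsy hsx]
        -- need: ψ (b*y+c) * √x ≤ ψ (b*x+c) * √y
        have hcross : Real.sqrt (b * y + c) * Real.sqrt x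
            ≤ Real.sqrt (b * x + c) * Real.sqrt y := by
          rw [← Real.sqrt_mul hv0.le, ← Real.sqrt_mul hu0.le]
          apply Real.sqrt_le_sqrt
          nlinarith
        have hpu : 0 ≤ ψ (b * x + c) := hnn _ hu0.le
        have key : Real.sqrt (b * x + c) * (ψ (b * y + c) * Real.sqrt x)
            ≤ Real.sqrt (b * x + c) * (ψ (b * x + c) * Real.sqrt y) := by
          nlinarith [mul_le_mul_of_nonneg_right h1 hsx.le,
            mul_le_mul_of_nonneg_left hcross hpu]
        exact le_of_mul_le_mul_left key hsu
    · intro rb hrb hfb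
      have hu0 : (0:ℝ) < b * rb + c := by nlinarith
      rcases le_or_gt (b * rb + c) rstar with h | h
      · have : rb ≤ rstar := by
          rw [← hfb, ← hfix]
          exact hmono (Set.mem_Ici.2 hu0.le) (Set.mem_Ici.2 hrpos.le) h
        have h2c : 0 ≤ 2 * c / b := by positivity
        nlinarith
      · have hu := subroot_upper ⟨hnn, hmono, hanti⟩ hrpos hfix h.le
        rw [hfb] at hu
        have key : rb ^ 2 ≤ (b * rb + c) * rstar := by
          nlinarith [Real.sq_sqrt hu0.le, Real.sq_sqrt hrpos.le,
            Real.sqrt_nonneg (b * rb + c), Real.sqrt_nonneg rstar, hrb.le]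
        have bmain : b * rb ≤ b ^ 2 * rstar + 2 * c := by
          nlinarith [key, mul_nonneg hc hrb.le, mul_nonneg hc hrpos.le,
            mul_pos hb0 hrb, sq_nonneg (rb - b * rstar), mul_nonneg hc hb0.le]
        have h2 : rb ≤ (b ^ 2 * rstar + 2 * c) / b := by
          rw [le_div_iff₀ hb0]; linarith
        calc rb ≤ (b ^ 2 * rstar + 2 * c) / b := h2
          _ = b * rstar + 2 * c / b := by field_simp
  · -- Part (3)
    intro b hb
    have hb0 : (0:ℝ) < b := lt_of_lt_of_le one_pos hb
    constructor
    · refine ⟨fun r hr => mul_nonneg hb0.le (hnn r hr),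
        fun x hx y hy hxy => mul_le_mul_of_nonneg_left (hmono hx hy hxy) hb0.le, ?_⟩
      intro x hx y hy hxy
      simp only
      rw [mul_div_assoc, mul_div_assoc]
      exact mul_le_mul_of_nonneg_left (hanti hx hy hxy) hb0.le
    · intro rb hrb hfb
      rcases le_or_gt rb rstar with h | h
      · have hb2 : 1 ≤ b ^ 2 := by nlinarith [hb]
        nlinarith [mul_le_mul_of_nonneg_right hb2 hrpos.le]
      · have hu := subroot_upper ⟨hnn, hmono, hanti⟩ hrpos hfix h.le
        have key : rb ≤ b * (Real.sqrt rb * Real.sqrt rstar) := by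
          nlinarith [mul_le_mul_of_nonneg_left hu hb0.le]
        have hsq := mul_self_le_mul_self hrb.le key
        have h1 : Real.sqrt rb * Real.sqrt rb = rb := Real.mul_self_sqrt hrb.le
        have h2 : Real.sqrt rstar * Real.sqrt rstar = rstar := Real.mul_self_sqrt hrpos.le
        have heq : b * (Real.sqrt rb * Real.sqrt rstar) * (b * (Real.sqrt rb * Real.sqrt rstar))
            = b ^ 2 * (rb * rstar) := by
          rw [show b * (Real.sqrt rb * Real.sqrt rstar) * (b * (Real.sqrt rb * Real.sqrt rstar))
            = b ^ 2 * ((Real.sqrt rb * Real.sqrt rb) * (Real.sqrt rstar * Real.sqrt rstar))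
            from by ring, h1, h2]
        have key2 : rb ^ 2 ≤ b ^ 2 * (rb * rstar) := by nlinarith [hsq, heq]
        nlinarith [key2]
end
end

section
/- Small-margin probability for a Gaussian vector. Let w ~ N(0, κ²I_{d+1}) with κ > 0 and let u be any fixed unit vector in ℝ^{d+1}. Then for every ε ∈ (0,1), P( |uᵀw| / ‖w‖₂ ≤ ε ) ≤ B·√d·ε, where B is an absolute positive constant (one may take B = π^{−1/2}). -/
open MeasureTheory ProbabilityTheory Real Finset
open scoped ENNReal NNReal

noncomputable section

lemma lintegral_pi_prod : ∀ {n : ℕ} (μ : Fin n → Measure ℝ), (∀ i, SigmaFinite (μ i)) →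
    ∀ (f : Fin n → ℝ → ℝ≥0∞), (∀ i, Measurable (f i)) →
    ∫⁻ x, ∏ i, f i (x i) ∂Measure.pi μ = ∏ i, ∫⁻ t, f i t ∂μ i := by
  intro n
  induction n with
  | zero =>
    intro μ _ f hf
    simp [Measure.pi_of_empty]
  | succ n ih =>
    intro μ hμ f hf
    have := (measurePreserving_piFinSuccAbove μ 0)
    have key : ∫⁻ x, ∏ i, f i (x i) ∂Measure.pi μ
        = ∫⁻ p : ℝ × (Fin n → ℝ), f 0 p.1 * ∏ j, f (Fin.succ j) (p.2 j)
            ∂((μ 0).prod (Measure.pi fun j => μ (Fin.succAbove 0 j))) := by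
      rw [← this.lintegral_comp]
      · congr 1
        ext x
        rw [Fin.prod_univ_succ]
        simp [MeasurableEquiv.piFinSuccAbove, Fin.succAbove_zero, Fin.tail]
      · exact (hf 0).comp measurable_fst |>.mul <|
          Finset.measurable_prod _ fun j _ => (hf _).comp ((measurable_pi_apply j).comp measurable_snd)
    have h2 := lintegral_prod_mul (μ := μ 0) (ν := Measure.pi fun j => μ (Fin.succAbove 0 j))
      (f := f 0) (g := fun y => ∏ j, f (Fin.succ j) (y j)) ((hf 0).aemeasurable)
      ((Finset.measurable_prod _ fun j _ => (hf _).comp (measurable_pi_apply j)).aemeasurable)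
    rw [key, h2, ih _ (fun j => hμ _) _ (fun j => hf _), Fin.prod_univ_succ]
    simp [Fin.succAbove_zero]

lemma gaussLaw_eq_withDensity (n : ℕ) (V : ℝ≥0) (hV : V ≠ 0) :
    Measure.pi (fun _ : Fin n => gaussianReal 0 V)
      = (volume : Measure (Fin n → ℝ)).withDensity (fun x => ∏ i, gaussianPDF 0 V (x i)) := by
  refine Measure.pi_eq (μ := fun _ => gaussianReal 0 V) fun s hs => ?_
  rw [withDensity_apply _ (MeasurableSet.univ_pi hs),
    ← lintegral_indicator (MeasurableSet.univ_pi hs) _]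
  have hind : ∀ x : Fin n → ℝ, (Set.pi Set.univ s).indicator
      (fun x => ∏ i, gaussianPDF 0 V (x i)) x = ∏ i, (s i).indicator (gaussianPDF 0 V) (x i) := by
    intro x
    by_cases hx : x ∈ Set.pi Set.univ s
    · rw [Set.indicator_of_mem hx]
      exact Finset.prod_congr rfl fun i _ =>
        (Set.indicator_of_mem (hx i (Set.mem_univ i)) _).symm
    · rw [Set.indicator_of_notMem hx]
      simp only [Set.mem_pi, Set.mem_univ, forall_true_left, not_forall] at hx
      obtain ⟨i, hi⟩ := hx
      exact (Finset.prod_eq_zero (Finset.mem_univ i)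
        (by rw [Set.indicator_of_notMem hi])).symm
  simp_rw [hind]
  rw [volume_pi, lintegral_pi_prod (fun _ => (volume : Measure ℝ)) (fun _ => inferInstance) _
    (fun i => (measurable_gaussianPDF 0 V).indicator (hs i))]
  exact Finset.prod_congr rfl fun i _ => by
    rw [lintegral_indicator (hs i) _, gaussianReal_apply _ hV _]

lemma map_withDensity_equiv {α β : Type*} [MeasurableSpace α] [MeasurableSpace β]
    (e : α ≃ᵐ β) (μ : Measure α) (f : α → ℝ≥0∞) (hf : Measurable f) :
    Measure.map e (μ.withDensity f) = (Measure.map e μ).withDensity (f ∘ e.symm) := by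
  ext S hS
  rw [Measure.map_apply e.measurable hS, withDensity_apply _ (e.measurable hS),
    withDensity_apply _ hS,
    setLIntegral_map hS (hf.comp e.symm.measurable) e.measurable]
  simp

lemma gauss_measure_E (n : ℕ) (V : ℝ≥0) (hV : V ≠ 0) :
    Measure.map ((MeasurableEquiv.toLp 2 (Fin n → ℝ)).symm).symm
        (Measure.pi (fun _ : Fin n => gaussianReal 0 V))
      = (volume : Measure (EuclideanSpace ℝ (Fin n))).withDensity
          (fun y => ENNReal.ofReal
            ((Real.sqrt (2 * π * V))⁻¹ ^ n * Real.exp (-‖y‖ ^ 2 / (2 * V)))) := by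
  have hmap := map_withDensity_equiv ((MeasurableEquiv.toLp 2 (Fin n → ℝ)).symm).symm
    (volume : Measure (Fin n → ℝ)) (fun x => ∏ i, gaussianPDF 0 V (x i))
    (by exact Finset.measurable_prod _ fun i _ =>
        (measurable_gaussianPDF 0 V).comp (measurable_pi_apply i))
  rw [gaussLaw_eq_withDensity n V hV, hmap,
    ((EuclideanSpace.volume_preserving_symm_measurableEquiv_toLp (Fin n)).symm _).map_eq]
  congr 1
  funext y
  have hco : ∀ i, (((MeasurableEquiv.toLp 2 (Fin n → ℝ)).symm).symm.symm y) i = y i := fun i => rfl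
  simp only [Function.comp_apply]
  have hn : ‖y‖ ^ 2 = ∑ i, (y i) ^ 2 := by
    rw [EuclideanSpace.norm_eq, Real.sq_sqrt (by positivity)]
    simp [Real.norm_eq_abs, sq_abs]
  have hpdf : ∀ i : Fin n, gaussianPDF 0 V ((((MeasurableEquiv.toLp 2 (Fin n → ℝ)).symm).symm.symm y) i)
      = ENNReal.ofReal ((Real.sqrt (2 * π * V))⁻¹ * Real.exp (-(y i) ^ 2 / (2 * V))) := by
    intro i
    have hcoi : (((MeasurableEquiv.toLp 2 (Fin n → ℝ)).symm).symm.symm y) i = y i := rfl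
    rw [gaussianPDF, gaussianPDFReal, hcoi]
    norm_num
  rw [Finset.prod_congr rfl fun i _ => hpdf i]
  rw [← ENNReal.ofReal_prod_of_nonneg (fun i _ => by positivity)]
  congr 1
  rw [Finset.prod_mul_distrib, Finset.prod_const, ← Real.exp_sum]
  congr 2
  · simp [Finset.card_univ]
  · rw [hn, ← Finset.sum_div, Finset.sum_neg_distrib]

lemma gauss_rotate (d : ℕ) (V : ℝ≥0) (hV : V ≠ 0) (u : Fin (d + 1) → ℝ)
    (hu : Real.sqrt (∑ i, u i * u i) = 1) (ε : ℝ) :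
    Measure.pi (fun _ : Fin (d + 1) => gaussianReal 0 V)
        {x | |∑ i, u i * x i| ≤ ε * Real.sqrt (∑ i, x i * x i)}
      = Measure.pi (fun _ : Fin (d + 1) => gaussianReal 0 V)
        {x | |x 0| ≤ ε * Real.sqrt (∑ i, x i * x i)} := by
  classical
  let n := d + 1
  set E := EuclideanSpace ℝ (Fin n)
  set φ := (MeasurableEquiv.toLp 2 (Fin n → ℝ)).symm
  set G := Measure.pi (fun _ : Fin n => gaussianReal 0 V) with hG
  set νE := Measure.map φ.symm G with hνE
  -- the unit vector in E
  set u' : E := φ.symm u with hu'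
  have hsum : ∀ y : E, Real.sqrt (∑ i, y i * y i) = ‖y‖ := by
    intro y
    rw [EuclideanSpace.norm_eq]
    congr 1
    simp [Real.norm_eq_abs, sq_abs, sq]
  have hunorm : ‖u'‖ = 1 := by
    rw [← hsum u', ← hu]
    rfl
  have hinner : ∀ (c : E) (y : E), (∑ i, c i * y i) = inner (𝕜 := ℝ) c y := by
    intro c y
    rw [PiLp.inner_apply]
    simp [RCLike.inner_apply]
    exact Finset.sum_congr rfl fun i _ => mul_comm _ _
  -- the target basis vector
  set e₀ : E := EuclideanSpace.single (0 : Fin n) (1 : ℝ) with he₀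
  have he₀norm : ‖e₀‖ = 1 := by rw [he₀, EuclideanSpace.norm_single]; norm_num
  -- the reflection
  set R : E ≃ₗᵢ[ℝ] E := Submodule.reflection (ℝ ∙ (u' - e₀))ᗮ with hR
  have hRu : R u' = e₀ := Submodule.reflection_sub (by rw [hunorm, he₀norm])
  have hRsymm_u : R.symm u' = e₀ := by
    rw [hR, Submodule.reflection_symm]; exact hRu
  -- measurable sets
  have hmeas : ∀ c : Fin n → ℝ, Measurable fun x : Fin n → ℝ =>
      |∑ i, c i * x i| - ε * Real.sqrt (∑ i, x i * x i) := by
    intro c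
    apply Measurable.sub
    · exact (Finset.measurable_sum _ fun i _ => (measurable_pi_apply i).const_mul _).abs
    · exact ((Finset.measurable_sum _ fun i _ =>
        ((measurable_pi_apply i).mul (measurable_pi_apply i))).sqrt).const_mul _
  have hSet : ∀ c : Fin n → ℝ, MeasurableSet
      {x : Fin n → ℝ | |∑ i, c i * x i| ≤ ε * Real.sqrt (∑ i, x i * x i)} := by
    intro c
    have : {x : Fin n → ℝ | |∑ i, c i * x i| ≤ ε * Real.sqrt (∑ i, x i * x i)}
        = {x | |∑ i, c i * x i| - ε * Real.sqrt (∑ i, x i * x i) ≤ 0} := by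
      ext x; simp [sub_nonpos]
    rw [this]
    exact measurableSet_le (hmeas c) measurable_const
  -- sets in E
  set A : Set E := {y : E | |inner (𝕜 := ℝ) u' y| ≤ ε * ‖y‖} with hA
  set A₀ : Set E := {y : E | |inner (𝕜 := ℝ) e₀ y| ≤ ε * ‖y‖} with hA₀
  have hAmeas : ∀ c : E, MeasurableSet {y : E | |inner (𝕜 := ℝ) c y| ≤ ε * ‖y‖} := by
    intro c
    have : Measurable fun y : E => |inner (𝕜 := ℝ) c y| - ε * ‖y‖ := by
      apply Measurable.sub
      · exact (measurable_const.inner measurable_id').abs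
      · exact measurable_norm.const_mul _
    have h2 : {y : E | |inner (𝕜 := ℝ) c y| ≤ ε * ‖y‖}
        = {y | |inner (𝕜 := ℝ) c y| - ε * ‖y‖ ≤ 0} := by
      ext y; simp [sub_nonpos]
    rw [h2]
    exact measurableSet_le this measurable_const
  -- identify pullbacks
  have hpre : ∀ c : Fin n → ℝ,
      φ.symm ⁻¹' {y : E | |inner (𝕜 := ℝ) (φ.symm c) y| ≤ ε * ‖y‖}
        = {x : Fin n → ℝ | |∑ i, c i * x i| ≤ ε * Real.sqrt (∑ i, x i * x i)} := by
    intro c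
    ext x
    simp only [Set.mem_preimage, Set.mem_setOf_eq]
    show |inner ℝ (φ.symm c) (φ.symm x)| ≤ ε * ‖φ.symm x‖ ↔ _
    rw [← hinner, ← hsum (φ.symm x)]
    exact Iff.rfl
  -- the gaussian density function on E
  set g : E → ℝ≥0∞ := fun y => ENNReal.ofReal
      ((Real.sqrt (2 * π * V))⁻¹ ^ (d + 1) * Real.exp (-‖y‖ ^ 2 / (2 * V))) with hg
  have hgmeas : Measurable g := by
    apply Measurable.ennreal_ofReal
    apply Measurable.const_mul
    exact Real.measurable_exp.comp ((measurable_norm.pow_const 2).neg.div_const _)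
  have hdens : νE = (volume : Measure E).withDensity g := by
    rw [hνE, hG]
    exact gauss_measure_E (d + 1) V hV
  -- invariance of νE under R
  have hinv : Measure.map R νE = νE := by
    set e : E ≃ᵐ E := R.toHomeomorph.toMeasurableEquiv with he
    have hce : (⇑e : E → E) = ⇑R := rfl
    have hcesymm : (⇑e.symm : E → E) = ⇑R.symm := rfl
    rw [hdens, ← hce, map_withDensity_equiv e _ g hgmeas]
    have hvol : Measure.map (⇑e) (volume : Measure E) = volume := by
      rw [hce]; exact R.measurePreserving.map_eq
    rw [hvol]
    congr 1
    funext y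
    simp only [Function.comp_apply, hcesymm, hg]
    rw [R.symm.norm_map]
  -- main chain
  have hchain1 : G {x : Fin n → ℝ | |∑ i, u i * x i| ≤ ε * Real.sqrt (∑ i, x i * x i)}
      = νE A := by
    rw [hνE, Measure.map_apply φ.symm.measurable (hAmeas u'), hpre u]
  have hchain0 : νE A₀
      = G {x : Fin n → ℝ | |x 0| ≤ ε * Real.sqrt (∑ i, x i * x i)} := by
    rw [hνE, Measure.map_apply φ.symm.measurable (hAmeas e₀)]
    congr 1
    ext x
    simp only [Set.mem_preimage, Set.mem_setOf_eq]
    show |inner ℝ e₀ (φ.symm x)| ≤ ε * ‖φ.symm x‖ ↔ _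
    rw [← hsum (φ.symm x)]
    have h0 : inner (𝕜 := ℝ) e₀ (φ.symm x) = x 0 := by
      rw [he₀, EuclideanSpace.inner_single_left]
      simp only [map_one, one_mul]
      rfl
    rw [h0]
    exact Iff.rfl
  have hrot : νE A = νE A₀ := by
    conv_lhs => rw [← hinv]
    rw [Measure.map_apply R.continuous.measurable (hAmeas u')]
    congr 1
    ext y
    simp only [Set.mem_preimage, hA, hA₀, Set.mem_setOf_eq]
    have h1 : inner (𝕜 := ℝ) u' (R y) = inner (𝕜 := ℝ) e₀ y := by
      conv_lhs => rw [← R.apply_symm_apply u']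
      rw [R.inner_map_map, hRsymm_u]
    rw [h1, R.norm_map]
  rw [hchain1, hrot, hchain0]

lemma gauss_interval (V : ℝ≥0) (hV : V ≠ 0) (c : ℝ) :
    gaussianReal 0 V {t : ℝ | |t| ≤ c}
      ≤ ENNReal.ofReal ((Real.sqrt (2 * π * V))⁻¹ * (2 * c)) := by
  have hset : {t : ℝ | |t| ≤ c} = Set.Icc (-c) c := by
    ext t; simp [abs_le]
  rw [gaussianReal_apply _ hV _, hset]
  calc ∫⁻ t in Set.Icc (-c) c, gaussianPDF 0 V t
      ≤ ∫⁻ _ in Set.Icc (-c) c, ENNReal.ofReal ((Real.sqrt (2 * π * V))⁻¹) := by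
        refine setLIntegral_mono measurable_const fun t _ => ?_
        rw [gaussianPDF]
        apply ENNReal.ofReal_le_ofReal
        rw [gaussianPDFReal]
        have hexp : Real.exp (-(t - 0) ^ 2 / (2 * V)) ≤ 1 := by
          rw [Real.exp_le_one_iff]
          apply div_nonpos_of_nonpos_of_nonneg
          · simp only [neg_nonpos]; positivity
          · positivity
        calc (Real.sqrt (2 * π * V))⁻¹ * Real.exp (-(t - 0) ^ 2 / (2 * V))
            ≤ (Real.sqrt (2 * π * V))⁻¹ * 1 := by
              apply mul_le_mul_of_nonneg_left hexp (by positivity)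
          _ = (Real.sqrt (2 * π * V))⁻¹ := mul_one _
    _ = ENNReal.ofReal ((Real.sqrt (2 * π * V))⁻¹) * volume (Set.Icc (-c) c) := by
        rw [setLIntegral_const]
    _ ≤ ENNReal.ofReal ((Real.sqrt (2 * π * V))⁻¹ * (2 * c)) := by
        rw [Real.volume_Icc, ENNReal.ofReal_mul (by positivity)]
        gcongr
        linarith

lemma gauss_second_moment (V : ℝ≥0) (hV : V ≠ 0) :
    ∫⁻ t, ENNReal.ofReal (t ^ 2) ∂gaussianReal 0 V ≤ ENNReal.ofReal (6 * V) := by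
  have hVpos : (0 : ℝ) < V := by positivity
  rw [gaussianReal_of_var_ne_zero _ hV]
  rw [lintegral_withDensity_eq_lintegral_mul _ (measurable_gaussianPDF 0 V)
    (by fun_prop)]
  simp only [Pi.mul_apply]
  simp_rw [mul_comm (gaussianPDF 0 V _)]
  have hb : (0 : ℝ) < 1 / (4 * V) := by positivity
  calc ∫⁻ t, (ENNReal.ofReal (t ^ 2) * gaussianPDF 0 V t)
      ≤ ∫⁻ t, ENNReal.ofReal (4 * V * (Real.sqrt (2 * π * V))⁻¹
          * Real.exp (-(1 / (4 * V)) * t ^ 2)) := by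
        refine lintegral_mono fun t => ?_
        rw [gaussianPDF, ← ENNReal.ofReal_mul (by positivity)]
        apply ENNReal.ofReal_le_ofReal
        rw [gaussianPDFReal]
        have h1 : t ^ 2 ≤ 4 * V * Real.exp (t ^ 2 / (4 * V)) := by
          have := Real.add_one_le_exp (t ^ 2 / (4 * V))
          calc (t:ℝ) ^ 2 = 4 * V * (t ^ 2 / (4 * V)) := by field_simp
          _ ≤ 4 * V * (t ^ 2 / (4 * V) + 1) := by nlinarith
          _ ≤ 4 * V * Real.exp (t ^ 2 / (4 * V)) := by nlinarith [Real.add_one_le_exp (t ^ 2 / (4 * V))]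
        calc t ^ 2 * ((Real.sqrt (2 * π * V))⁻¹ * Real.exp (-(t - 0) ^ 2 / (2 * V)))
            ≤ (4 * V * Real.exp (t ^ 2 / (4 * V))) *
              ((Real.sqrt (2 * π * V))⁻¹ * Real.exp (-(t - 0) ^ 2 / (2 * V))) := by
              apply mul_le_mul_of_nonneg_right h1 (by positivity)
          _ = 4 * V * (Real.sqrt (2 * π * V))⁻¹
              * (Real.exp (t ^ 2 / (4 * V)) * Real.exp (-(t - 0) ^ 2 / (2 * V))) := by ring
          _ = 4 * V * (Real.sqrt (2 * π * V))⁻¹ * Real.exp (-(1 / (4 * V)) * t ^ 2) := by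
              rw [← Real.exp_add]
              congr 1
              field_simp
              ring
    _ = ENNReal.ofReal (∫ t : ℝ, 4 * V * (Real.sqrt (2 * π * V))⁻¹
          * Real.exp (-(1 / (4 * V)) * t ^ 2)) := by
        rw [MeasureTheory.ofReal_integral_eq_lintegral_ofReal]
        · exact ((integrable_exp_neg_mul_sq hb).const_mul _)
        · exact Filter.Eventually.of_forall fun t => by positivity
    _ ≤ ENNReal.ofReal (6 * V) := by
        apply ENNReal.ofReal_le_ofReal
        rw [MeasureTheory.integral_const_mul, integral_gaussian]
        have h4 : π / (1 / (4 * V)) = 2 * (2 * π * V) := by field_simp; ring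
        rw [h4, Real.sqrt_mul (by norm_num : (0:ℝ) ≤ 2) (2 * π * ↑V)]
        have hs2 : Real.sqrt 2 ≤ 1.5 := by
          rw [show (1.5 : ℝ) = Real.sqrt (1.5 ^ 2) by rw [Real.sqrt_sq]; norm_num]
          apply Real.sqrt_le_sqrt; norm_num
        have hss : Real.sqrt (2 * π * V) ≠ 0 := by positivity
        calc 4 * V * (Real.sqrt (2 * π * V))⁻¹ * (Real.sqrt 2 * Real.sqrt (2 * π * V))
            = 4 * Real.sqrt 2 * V := by field_simp
          _ ≤ 6 * V := by nlinarith [hVpos.le]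

lemma gauss_marginal_sq (m : ℕ) (V : ℝ≥0) (j : Fin m) :
    ∫⁻ z, ENNReal.ofReal ((z j) ^ 2) ∂(Measure.pi fun _ : Fin m => gaussianReal 0 V)
      = ∫⁻ t, ENNReal.ofReal (t ^ 2) ∂gaussianReal 0 V := by
  classical
  have h := lintegral_pi_prod (fun _ : Fin m => gaussianReal 0 V) (fun _ => inferInstance)
    (fun i => if i = j then (fun t => ENNReal.ofReal (t ^ 2)) else fun _ => 1)
    (fun i => by split <;> fun_prop)
  have hL : ∀ x : Fin m → ℝ,
      (∏ i, (if i = j then (fun t => ENNReal.ofReal (t ^ 2)) else fun _ => (1:ℝ≥0∞)) (x i))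
        = ENNReal.ofReal ((x j) ^ 2) := by
    intro x
    rw [Finset.prod_congr rfl (fun i _ =>
      show (if i = j then (fun t => ENNReal.ofReal (t ^ 2)) else fun _ => (1:ℝ≥0∞)) (x i)
        = if i = j then ENNReal.ofReal ((x i) ^ 2) else 1 from by split <;> rfl)]
    simp
  have hR : (∏ i : Fin m, ∫⁻ t, (if i = j then (fun t => ENNReal.ofReal (t ^ 2))
        else fun _ => (1:ℝ≥0∞)) t ∂gaussianReal 0 V)
      = ∫⁻ t, ENNReal.ofReal (t ^ 2) ∂gaussianReal 0 V := by
    rw [Finset.prod_congr rfl (fun i _ =>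
      show (∫⁻ t, (if i = j then (fun t => ENNReal.ofReal (t ^ 2))
          else fun _ => (1:ℝ≥0∞)) t ∂gaussianReal 0 V)
        = if i = j then ∫⁻ t, ENNReal.ofReal (t ^ 2) ∂gaussianReal 0 V else 1 from by
        split
        · rfl
        · simp)]
    simp
  simp_rw [hL] at h
  rw [hR] at h
  exact h

lemma gauss_sqrt_sum (m : ℕ) (V : ℝ≥0) (hV : V ≠ 0) :
    ∫⁻ z, ENNReal.ofReal (Real.sqrt (∑ j, z j * z j))
        ∂(Measure.pi fun _ : Fin m => gaussianReal 0 V)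
      ≤ ENNReal.ofReal (3 * Real.sqrt m * Real.sqrt V) := by
  set Γ := Measure.pi fun _ : Fin m => gaussianReal 0 V with hΓ
  have hVpos : (0:ℝ) < V := by positivity
  have hq : ∫⁻ z, ENNReal.ofReal (∑ j, z j * z j) ∂Γ ≤ ENNReal.ofReal (6 * m * V) := by
    have hz : ∀ z : Fin m → ℝ, ENNReal.ofReal (∑ j, z j * z j)
        = ∑ j, ENNReal.ofReal ((z j) ^ 2) := by
      intro z
      rw [ENNReal.ofReal_sum_of_nonneg (fun j _ => mul_self_nonneg _)]
      exact Finset.sum_congr rfl fun j _ => by rw [← sq]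
    simp_rw [hz]
    rw [lintegral_finset_sum _ (fun j _ => by fun_prop)]
    calc ∑ j : Fin m, ∫⁻ z, ENNReal.ofReal ((z j) ^ 2) ∂Γ
        = ∑ _j : Fin m, ∫⁻ t, ENNReal.ofReal (t ^ 2) ∂gaussianReal 0 V :=
          Finset.sum_congr rfl fun j _ => gauss_marginal_sq m V j
      _ ≤ ∑ _j : Fin m, ENNReal.ofReal (6 * V) :=
          Finset.sum_le_sum fun j _ => gauss_second_moment V hV
      _ = m * ENNReal.ofReal (6 * V) := by
          rw [Finset.sum_const, Finset.card_univ, Fintype.card_fin, nsmul_eq_mul]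
      _ = ENNReal.ofReal (6 * m * V) := by
          rw [← ENNReal.ofReal_natCast m, ← ENNReal.ofReal_mul (by positivity)]
          congr 1
          ring
  have hmf : Measurable fun z : Fin m → ℝ => ENNReal.ofReal (Real.sqrt (∑ j, z j * z j)) :=
    Measurable.ennreal_ofReal (Real.continuous_sqrt.measurable.comp
      (Finset.measurable_sum _ fun j _ => (measurable_pi_apply j).mul (measurable_pi_apply j)))
  have hCS := ENNReal.lintegral_mul_le_Lp_mul_Lq Γ
    (⟨by norm_num, by norm_num, by norm_num⟩ : Real.HolderConjugate 2 2)
    (f := fun z => ENNReal.ofReal (Real.sqrt (∑ j, z j * z j))) (g := fun _ => 1)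
    hmf.aemeasurable aemeasurable_const
  simp only [Pi.mul_apply, mul_one, ENNReal.one_rpow, lintegral_one] at hCS
  have hΓuniv : Γ Set.univ = 1 := by
    rw [hΓ]; exact measure_univ
  rw [hΓuniv] at hCS
  simp only [ENNReal.one_rpow, mul_one] at hCS
  have hf2 : ∀ z : Fin m → ℝ, (ENNReal.ofReal (Real.sqrt (∑ j, z j * z j))) ^ (2:ℝ)
      = ENNReal.ofReal (∑ j, z j * z j) := by
    intro z
    rw [ENNReal.ofReal_rpow_of_nonneg (Real.sqrt_nonneg _) (by norm_num)]
    congr 1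
    rw [show (2:ℝ) = ((2:ℕ):ℝ) by norm_num, Real.rpow_natCast, Real.sq_sqrt]
    exact Finset.sum_nonneg fun j _ => mul_self_nonneg _
  simp_rw [hf2] at hCS
  refine le_trans hCS ?_
  calc (∫⁻ z, ENNReal.ofReal (∑ j, z j * z j) ∂Γ) ^ ((1:ℝ)/2)
      ≤ (ENNReal.ofReal (6 * m * V)) ^ ((1:ℝ)/2) := by
        exact ENNReal.rpow_le_rpow hq (by norm_num)
    _ = ENNReal.ofReal ((6 * m * V) ^ ((1:ℝ)/2)) := by
        rw [← ENNReal.ofReal_rpow_of_nonneg (by positivity) (by norm_num)]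
    _ ≤ ENNReal.ofReal (3 * Real.sqrt m * Real.sqrt V) := by
        apply ENNReal.ofReal_le_ofReal
        rw [← Real.sqrt_eq_rpow]
        rw [show 6 * (m:ℝ) * V = 6 * ((m:ℝ) * V) by ring,
          Real.sqrt_mul (by norm_num) _, Real.sqrt_mul (Nat.cast_nonneg m) _]
        have h6 : Real.sqrt 6 ≤ 3 := by
          rw [show (3:ℝ) = Real.sqrt (3 ^ 2) by rw [Real.sqrt_sq]; norm_num]
          apply Real.sqrt_le_sqrt; norm_num
        nlinarith [Real.sqrt_nonneg (m:ℝ), Real.sqrt_nonneg (V:ℝ),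
          Real.sqrt_nonneg (6:ℝ), mul_nonneg (Real.sqrt_nonneg (m:ℝ)) (Real.sqrt_nonneg (V:ℝ))]

lemma gauss_coord_bound (d : ℕ) (V : ℝ≥0) (hV : V ≠ 0) {ε : ℝ} (hε0 : 0 < ε) (hε1 : ε < 1) :
    Measure.pi (fun _ : Fin (d + 1) => gaussianReal 0 V)
        {x | |x 0| ≤ ε * Real.sqrt (∑ i, x i * x i)}
      ≤ ENNReal.ofReal (3 * (ε / Real.sqrt (1 - ε ^ 2)) * Real.sqrt d) := by
  classical
  have hVpos : (0:ℝ) < V := by positivity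
  have h1ε : 0 < 1 - ε ^ 2 := by nlinarith
  set a := ε / Real.sqrt (1 - ε ^ 2) with ha
  have ha0 : 0 ≤ a := div_nonneg hε0.le (Real.sqrt_nonneg _)
  set C := (Real.sqrt (2 * π * V))⁻¹ with hC
  have hC0 : 0 ≤ C := by positivity
  set γ := gaussianReal 0 V with hγ
  set Γ := Measure.pi fun _ : Fin d => γ with hΓ
  set G := Measure.pi fun _ : Fin (d + 1) => γ with hG
  set e := MeasurableEquiv.piFinSuccAbove (fun _ : Fin (d + 1) => ℝ) 0 with he
  have hmp : MeasurePreserving e G (γ.prod Γ) :=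
    measurePreserving_piFinSuccAbove (fun _ : Fin (d + 1) => γ) 0
  set T : Set (Fin (d + 1) → ℝ) := {x | |x 0| ≤ ε * Real.sqrt (∑ i, x i * x i)} with hTdef
  have hT : MeasurableSet T := by
    have hm : Measurable fun x : Fin (d+1) → ℝ =>
        |x 0| - ε * Real.sqrt (∑ i, x i * x i) :=
      ((measurable_pi_apply 0).abs).sub
        ((Real.continuous_sqrt.measurable.comp (Finset.measurable_sum _ fun i _ =>
          (measurable_pi_apply i).mul (measurable_pi_apply i))).const_mul _)
    have : T = {x | |x 0| - ε * Real.sqrt (∑ i, x i * x i) ≤ 0} := by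
      ext x; simp [hTdef, sub_nonpos]
    rw [this]
    exact measurableSet_le hm measurable_const
  set U' : Set (ℝ × (Fin d → ℝ)) := {p | |p.1| ≤ a * Real.sqrt (∑ j, p.2 j * p.2 j)} with hU'def
  have hU' : MeasurableSet U' := by
    have hm : Measurable fun p : ℝ × (Fin d → ℝ) =>
        |p.1| - a * Real.sqrt (∑ j, p.2 j * p.2 j) :=
      (measurable_fst.abs).sub
        ((Real.continuous_sqrt.measurable.comp (Finset.measurable_sum _ fun j _ =>
          ((measurable_pi_apply j).comp measurable_snd).mul
            ((measurable_pi_apply j).comp measurable_snd))).const_mul _)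
    have : U' = {p | |p.1| - a * Real.sqrt (∑ j, p.2 j * p.2 j) ≤ 0} := by
      ext p; simp [hU'def, sub_nonpos]
    rw [this]
    exact measurableSet_le hm measurable_const
  have hGT : G T = (γ.prod Γ) (e.symm ⁻¹' T) := by
    rw [← hmp.map_eq, Measure.map_apply e.measurable (e.symm.measurable hT)]
    congr 1
    ext x
    simp
  have hsub : e.symm ⁻¹' T ⊆ U' := by
    rintro ⟨t, z⟩ hp
    simp only [Set.mem_preimage, hTdef, Set.mem_setOf_eq] at hp
    set q := ∑ j, z j * z j with hqdef
    have hq0 : 0 ≤ q := Finset.sum_nonneg fun j _ => mul_self_nonneg _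
    have h0 : (e.symm (t, z)) 0 = t := by
      simp [he, MeasurableEquiv.piFinSuccAbove]
    have hsucc : ∀ j : Fin d, (e.symm (t, z)) (Fin.succ j) = z j := by
      intro j
      have : (e.symm (t, z)) (Fin.succAbove 0 j) = z j := by
        simp [he, MeasurableEquiv.piFinSuccAbove]
      rwa [Fin.succAbove_zero] at this
    have hsum : ∑ i, (e.symm (t, z)) i * (e.symm (t, z)) i = t * t + q := by
      rw [Fin.sum_univ_succ, h0]
      simp_rw [hsucc]
      rfl
    rw [h0, hsum] at hp
    -- now: |t| ≤ ε √(t t + q)  ⊢ |t| ≤ a √q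
    simp only [hU'def, Set.mem_setOf_eq, ← hqdef]
    have htq : 0 ≤ t * t + q := by nlinarith [mul_self_nonneg t]
    have hsq : |t| * |t| ≤ (ε * Real.sqrt (t * t + q)) * (ε * Real.sqrt (t * t + q)) :=
      mul_le_mul hp hp (abs_nonneg t) (by positivity)
    rw [abs_mul_abs_self] at hsq
    have hsq2 : t * t ≤ ε ^ 2 * (t * t + q) := by
      have := Real.mul_self_sqrt htq
      nlinarith [hsq]
    have haa : a * a = ε ^ 2 / (1 - ε ^ 2) := by
      rw [ha, div_mul_div_comm, Real.mul_self_sqrt h1ε.le, ← sq]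
    have htt : t * t ≤ a * a * q := by
      rw [haa, div_mul_eq_mul_div, le_div_iff₀ h1ε]
      nlinarith
    calc |t| = Real.sqrt (t * t) := (Real.sqrt_mul_self_eq_abs t).symm
      _ ≤ Real.sqrt (a * a * q) := Real.sqrt_le_sqrt htt
      _ = a * Real.sqrt q := by
          rw [Real.sqrt_mul (mul_self_nonneg a), Real.sqrt_mul_self ha0]
  have hprod : (γ.prod Γ) U' = ∫⁻ z, γ {t | |t| ≤ a * Real.sqrt (∑ j, z j * z j)} ∂Γ := by
    have h1 : γ.prod Γ = Measure.map Prod.swap (Γ.prod γ) := (Measure.prod_swap).symm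
    rw [h1, Measure.map_apply measurable_swap hU',
      Measure.prod_apply (measurable_swap hU')]
    refine lintegral_congr fun z => ?_
    congr 1
  calc G T = (γ.prod Γ) (e.symm ⁻¹' T) := hGT
    _ ≤ (γ.prod Γ) U' := measure_mono hsub
    _ = ∫⁻ z, γ {t | |t| ≤ a * Real.sqrt (∑ j, z j * z j)} ∂Γ := hprod
    _ ≤ ∫⁻ z, ENNReal.ofReal (2 * a * C) * ENNReal.ofReal (Real.sqrt (∑ j, z j * z j)) ∂Γ := by
        refine lintegral_mono fun z => ?_
        refine le_trans (gauss_interval V hV _) ?_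
        rw [← ENNReal.ofReal_mul (by positivity)]
        apply ENNReal.ofReal_le_ofReal
        apply le_of_eq
        rw [hC]
        ring
    _ = ENNReal.ofReal (2 * a * C) * ∫⁻ z, ENNReal.ofReal (Real.sqrt (∑ j, z j * z j)) ∂Γ := by
        have hmeas' : Measurable fun z : Fin d → ℝ =>
            ENNReal.ofReal (Real.sqrt (∑ j, z j * z j)) :=
          Measurable.ennreal_ofReal
            (Real.continuous_sqrt.measurable.comp (Finset.measurable_sum _ fun j _ =>
              (measurable_pi_apply j).mul (measurable_pi_apply j)))
        rw [lintegral_const_mul _ hmeas']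
    _ ≤ ENNReal.ofReal (2 * a * C) * ENNReal.ofReal (3 * Real.sqrt d * Real.sqrt V) := by
        gcongr
        exact gauss_sqrt_sum d V hV
    _ ≤ ENNReal.ofReal (3 * a * Real.sqrt d) := by
        rw [← ENNReal.ofReal_mul (by positivity)]
        apply ENNReal.ofReal_le_ofReal
        have hsplit : Real.sqrt (2 * π * V) = Real.sqrt (2 * π) * Real.sqrt V :=
          Real.sqrt_mul (by positivity) _
        have h2pi : 2 ≤ Real.sqrt (2 * π) := by
          nlinarith [Real.sq_sqrt (show (0:ℝ) ≤ 2 * π by positivity),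
            Real.sqrt_nonneg (2 * π), Real.pi_gt_three]
        have hV0 : 0 < Real.sqrt V := Real.sqrt_pos.mpr hVpos
        have hCle : C * Real.sqrt V ≤ 1 / 2 := by
          rw [hC, hsplit, mul_inv, mul_assoc, inv_mul_cancel₀ hV0.ne', mul_one]
          calc (Real.sqrt (2 * π))⁻¹ ≤ 2⁻¹ := by
                apply inv_anti₀ (by norm_num) h2pi
            _ = 1 / 2 := by norm_num
        have key := mul_le_mul_of_nonneg_left hCle
          (show (0:ℝ) ≤ 6 * (a * Real.sqrt d) by positivity)
        nlinarith [key]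

/-- Small-margin probability for a Gaussian vector: for `w ~ N(0, κ²I_{d+1})` and any fixed
unit vector `u ∈ ℝ^{d+1}`, and any `ε ∈ (0,1)`,
`P(|uᵀw|/‖w‖₂ ≤ ε) ≤ B √d ε` for an absolute positive constant `B` (one may take `B = π^{-1/2}`). -/
theorem gaussian_small_margin :
    ∃ B : ℝ, 0 < B ∧
      ∀ (d : ℕ) (κ : ℝ), 0 < κ →
      ∀ (Ω : Type) (_ : MeasureSpace Ω) (_ : IsProbabilityMeasure (ℙ : Measure Ω))
        (w : Ω → Fin (d + 1) → ℝ),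
        Measure.map w ℙ = gaussLawVec d κ →
        ∀ u : Fin (d + 1) → ℝ, nrm u = 1 →
        ∀ ε : ℝ, 0 < ε → ε < 1 →
          ℙ {ω | |dot u (w ω)| / nrm (w ω) ≤ ε} ≤ ENNReal.ofReal (B * Real.sqrt d * ε) := by
  refine ⟨12, by norm_num, ?_⟩
  intro d κ hκ Ω _ hPΩ w hw u hu ε hε0 hε1
  set V := (κ ^ 2).toNNReal with hVdef
  have hκ2 : (0:ℝ) < κ ^ 2 := by positivity
  have hV : V ≠ 0 := by
    rw [hVdef, ← NNReal.coe_ne_zero, Real.coe_toNNReal _ hκ2.le]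
    exact hκ2.ne'
  haveI : IsProbabilityMeasure (gaussLawVec d κ) := by
    unfold gaussLawVec; infer_instance
  have hwae : AEMeasurable w ℙ := by
    by_contra h
    rw [Measure.map_of_not_aemeasurable h] at hw
    have h1 : (gaussLawVec d κ) Set.univ = 1 := measure_univ
    rw [← hw] at h1
    simp at h1
  set S : Set (Fin (d + 1) → ℝ) := {x | |dot u x| ≤ ε * nrm x} with hS
  have hSmeas : MeasurableSet S := by
    have hm : Measurable fun x : Fin (d+1) → ℝ => |dot u x| - ε * nrm x := by
      apply Measurable.sub
      · exact (Finset.measurable_sum _ fun i _ => (measurable_pi_apply i).const_mul _).abs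
      · exact (Real.continuous_sqrt.measurable.comp (Finset.measurable_sum _ fun i _ =>
          (measurable_pi_apply i).mul (measurable_pi_apply i))).const_mul _
    have : S = {x | |dot u x| - ε * nrm x ≤ 0} := by
      ext x; simp [hS, sub_nonpos]
    rw [this]
    exact measurableSet_le hm measurable_const
  have hptwise : ∀ x : Fin (d+1) → ℝ, (|dot u x| / nrm x ≤ ε ↔ |dot u x| ≤ ε * nrm x) := by
    intro x
    have hd0 : 0 ≤ dot x x := Finset.sum_nonneg fun i _ => mul_self_nonneg _
    have hn0 : 0 ≤ nrm x := Real.sqrt_nonneg _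
    rcases eq_or_lt_of_le hn0 with hzero | hpos
    · have hx0 : ∀ i, x i = 0 := by
        intro i
        have hdd : dot x x = 0 := by
          have := Real.sqrt_eq_zero hd0 |>.mp hzero.symm
          exact this
        have := (Finset.sum_eq_zero_iff_of_nonneg
          (fun i _ => mul_self_nonneg (x i))).mp hdd i (Finset.mem_univ i)
        nlinarith [this]
      have hdot : dot u x = 0 := Finset.sum_eq_zero fun i _ => by rw [hx0 i, mul_zero]
      rw [hdot, ← hzero]
      simp [hε0.le]
    · rw [div_le_iff₀ hpos, mul_comm]
  have hsetEq : {ω | |dot u (w ω)| / nrm (w ω) ≤ ε} = w ⁻¹' S := by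
    ext ω
    simp only [Set.mem_setOf_eq, Set.mem_preimage, hS]
    exact hptwise (w ω)
  rw [hsetEq, ← Measure.map_apply_of_aemeasurable hwae hSmeas, hw]
  have hrot := gauss_rotate d V hV u hu ε
  have hcoord := gauss_coord_bound d V hV hε0 hε1
  have hmain : (gaussLawVec d κ) S ≤ ENNReal.ofReal (3 * (ε / Real.sqrt (1 - ε ^ 2)) * Real.sqrt d) := by
    calc (gaussLawVec d κ) S
        = Measure.pi (fun _ : Fin (d+1) => gaussianReal 0 V)
            {x | |∑ i, u i * x i| ≤ ε * Real.sqrt (∑ i, x i * x i)} := rfl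
      _ = Measure.pi (fun _ : Fin (d+1) => gaussianReal 0 V)
            {x | |x 0| ≤ ε * Real.sqrt (∑ i, x i * x i)} := hrot
      _ ≤ ENNReal.ofReal (3 * (ε / Real.sqrt (1 - ε ^ 2)) * Real.sqrt d) := hcoord
  by_cases hd : d = 0
  · subst hd
    refine le_trans hmain ?_
    simp
  · have hd1 : (1:ℝ) ≤ d := Nat.one_le_cast.mpr (Nat.pos_of_ne_zero hd)
    have hsd : 1 ≤ Real.sqrt d := by
      rw [show (1:ℝ) = Real.sqrt 1 by simp]
      exact Real.sqrt_le_sqrt hd1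
    by_cases hεhalf : ε ≤ 1 / 2
    · refine le_trans hmain (ENNReal.ofReal_le_ofReal ?_)
      have h1ε : (0:ℝ) < 1 - ε ^ 2 := by nlinarith
      have hsq : (1:ℝ)/2 ≤ Real.sqrt (1 - ε ^ 2) := by
        nlinarith [Real.sq_sqrt h1ε.le, Real.sqrt_nonneg (1 - ε ^ 2)]
      have hdiv : ε / Real.sqrt (1 - ε ^ 2) ≤ 2 * ε := by
        calc ε / Real.sqrt (1 - ε ^ 2) ≤ ε / (1/2) :=
              div_le_div_of_nonneg_left hε0.le (by norm_num) hsq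
          _ = 2 * ε := by ring
      nlinarith [Real.sqrt_nonneg (d:ℝ), mul_le_mul_of_nonneg_right hdiv
        (Real.sqrt_nonneg (d:ℝ)), hε0.le, hsd]
    · push_neg at hεhalf
      calc (gaussLawVec d κ) S ≤ 1 := prob_le_one
        _ ≤ ENNReal.ofReal (12 * Real.sqrt d * ε) := by
            rw [ENNReal.one_le_ofReal]
            nlinarith [hsd, hε0.le]
end
end
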